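/- arXiv:1310.0947 — 7 statements merged into one kernel-verified Lean document; each statement's English description precedes it below -/
import Mathlib

section
/- Let f : [a,b] → ℝ be a mapping such that the (n−1)-th derivative f^(n−1) (n ≥ 1) is absolutely continuous on [a,b]. Then for any x ∈ [a,b] one has the identity: ∫_a^b f(t) dt = Σ_{k=0}^{n−1} (1/(k+1)!) [ (x−a)^{k+1} f^(k)(a) + (−1)^k (b−x)^{k+1} f^(k)(b) ] + (1/n!) ∫_a^b (x−t)^n f^(n)(t) dt. -/
/-! Integrating `(x - t)^m f^(m)(t) / m!` by parts, with `-(x - t)^(m+1) / (m+1)!` as the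
antiderivative of `(x - t)^m / m!`, splits off the `m`-th boundary term and leaves the same
remainder one order higher. Starting from `∫ f` (the case `m = 0`) and iterating `n` times gives
the identity. -/

open MeasureTheory Set

theorem integral_pow_succ_mul_eq {g G : ℝ → ℝ} {a b : ℝ} (x : ℝ) (m : ℕ)
    (hG : ∀ t ∈ uIcc a b, HasDerivAt G (g t) t) (hg : IntervalIntegrable g volume a b) :
    ∫ t in a..b, (x - t) ^ (m + 1) * g t =
      (x - b) ^ (m + 1) * G b - (x - a) ^ (m + 1) * G a +
        ((m : ℝ) + 1) * ∫ t in a..b, (x - t) ^ m * G t := by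
  have hpow : ∀ t ∈ uIcc a b, HasDerivAt (fun s => (x - s) ^ (m + 1))
      (-(((m : ℝ) + 1) * (x - t) ^ m)) t := by
    intro t _
    simpa using ((hasDerivAt_id t).const_sub x).fun_pow (m + 1)
  have hpow_int : IntervalIntegrable (fun t => -(((m : ℝ) + 1) * (x - t) ^ m)) volume a b :=
    (by fun_prop : Continuous fun t : ℝ => -(((m : ℝ) + 1) * (x - t) ^ m)).intervalIntegrable a b
  rw [intervalIntegral.integral_mul_deriv_eq_deriv_mul hpow hG hpow_int hg]
  simp only [neg_mul, intervalIntegral.integral_neg, mul_assoc, intervalIntegral.integral_const_mul]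
  ring

theorem integral_pow_mul_div_factorial_eq {g G : ℝ → ℝ} {a b : ℝ} (x : ℝ) (m : ℕ)
    (hG : ∀ t ∈ uIcc a b, HasDerivAt G (g t) t) (hg : IntervalIntegrable g volume a b) :
    (1 / (m.factorial : ℝ)) * ∫ t in a..b, (x - t) ^ m * G t =
      (1 / ((m + 1).factorial : ℝ)) *
          ((x - a) ^ (m + 1) * G a + (-1 : ℝ) ^ m * (b - x) ^ (m + 1) * G b) +
        (1 / ((m + 1).factorial : ℝ)) * ∫ t in a..b, (x - t) ^ (m + 1) * g t := by
  have hsign : (x - b) ^ (m + 1) = -((-1 : ℝ) ^ m * (b - x) ^ (m + 1)) := by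
    rw [show x - b = -1 * (b - x) by ring, mul_pow, pow_succ]
    ring
  rw [integral_pow_succ_mul_eq x m hG hg, hsign, Nat.factorial_succ, Nat.cast_mul]
  field_simp
  push_cast
  ring

theorem integral_eq_sum_add_integral_pow_mul_iteratedDeriv_of_uIcc
    (f : ℝ → ℝ) (a b x : ℝ) (n : ℕ)
    (hderiv : ∀ k < n, ∀ t ∈ uIcc a b,
      HasDerivAt (iteratedDeriv k f) (iteratedDeriv (k + 1) f t) t)
    (hint : IntervalIntegrable (iteratedDeriv n f) volume a b) :
    ∫ t in a..b, f t =
      (∑ k ∈ Finset.range n, (1 / (Nat.factorial (k + 1) : ℝ)) *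
        ((x - a) ^ (k + 1) * iteratedDeriv k f a +
          (-1 : ℝ) ^ k * (b - x) ^ (k + 1) * iteratedDeriv k f b)) +
      (1 / (Nat.factorial n : ℝ)) * ∫ t in a..b, (x - t) ^ n * iteratedDeriv n f t := by
  induction n with
  | zero => simp
  | succ n ih =>
    have hint_n : IntervalIntegrable (iteratedDeriv n f) volume a b :=
      ContinuousOn.intervalIntegrable fun t ht =>
        (hderiv n n.lt_succ_self t ht).continuousAt.continuousWithinAt
    rw [ih (fun k hk => hderiv k (hk.trans n.lt_succ_self)) hint_n, Finset.sum_range_succ,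
      integral_pow_mul_div_factorial_eq x n (hderiv n n.lt_succ_self) hint, add_assoc]

theorem integral_eq_sum_add_integral_pow_mul_iteratedDeriv_general
    (f : ℝ → ℝ) (a b : ℝ) (hab : a < b) (n : ℕ)
    (hderiv : ∀ k < n, ∀ t ∈ Icc a b,
      HasDerivAt (iteratedDeriv k f) (iteratedDeriv (k + 1) f t) t)
    (hint : IntervalIntegrable (iteratedDeriv n f) volume a b)
    (x : ℝ) :
    ∫ t in a..b, f t =
      (∑ k ∈ Finset.range n, (1 / (Nat.factorial (k + 1) : ℝ)) *
        ((x - a) ^ (k + 1) * iteratedDeriv k f a +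
          (-1 : ℝ) ^ k * (b - x) ^ (k + 1) * iteratedDeriv k f b)) +
      (1 / (Nat.factorial n : ℝ)) * ∫ t in a..b, (x - t) ^ n * iteratedDeriv n f t := by
  rw [← uIcc_of_le hab.le] at hderiv
  exact integral_eq_sum_add_integral_pow_mul_iteratedDeriv_of_uIcc f a b x n hderiv hint

/-- **Lemma (Barnett–Dragomir).** If `f^(n-1)` (`n ≥ 1`) is absolutely continuous on `[a, b]`
(formalized: each iterated derivative of order `k < n` has the `(k+1)`-st iterated derivative
as its derivative on `[a, b]`, and the `n`-th iterated derivative is integrable on `[a, b]`),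
then for any `x ∈ [a, b]`,
`∫_a^b f = ∑_{k=0}^{n-1} (1/(k+1)!) [(x-a)^{k+1} f^(k)(a) + (-1)^k (b-x)^{k+1} f^(k)(b)]
  + (1/n!) ∫_a^b (x-t)^n f^(n)(t) dt`. -/
theorem integral_eq_sum_add_integral_pow_mul_iteratedDeriv
    (f : ℝ → ℝ) (a b : ℝ) (hab : a < b) (n : ℕ) (hn : 1 ≤ n)
    (hderiv : ∀ k < n, ∀ t ∈ Icc a b,
      HasDerivAt (iteratedDeriv k f) (iteratedDeriv (k + 1) f t) t)
    (hint : IntervalIntegrable (iteratedDeriv n f) volume a b)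
    (x : ℝ) (hx : x ∈ Icc a b) :
    ∫ t in a..b, f t =
      (∑ k ∈ Finset.range n, (1 / (Nat.factorial (k + 1) : ℝ)) *
        ((x - a) ^ (k + 1) * iteratedDeriv k f a +
          (-1 : ℝ) ^ k * (b - x) ^ (k + 1) * iteratedDeriv k f b)) +
      (1 / (Nat.factorial n : ℝ)) * ∫ t in a..b, (x - t) ^ n * iteratedDeriv n f t :=
  integral_eq_sum_add_integral_pow_mul_iteratedDeriv_general f a b hab n hderiv hint x
end

section
/- Let f : [a,b] → ℝ be a mapping such that the (n−1)-th derivative f^(n−1) (n ≥ 1) is absolutely continuous on [a,b]. If |f^(n)| is convex on [a,b], then for all x ∈ [a,b]: | ∫_a^b f(t) dt − Σ_{k=0}^{n−1} (1/(k+1)!) [ (x−a)^{k+1} f^(k)(a) + (−1)^k (b−x)^{k+1} f^(k)(b) ] | ≤ (1/(n!(b−a))) { |f^(n)(a)| [ (b−x)(x−a)^{n+1}/(n+1) + (b−x)^{n+2}/((n+1)(n+2)) + (x−a)^{n+2}/(n+2) ] + |f^(n)(b)| [ (b−x)^{n+1}(x−a)/(n+1) + (x−a)^{n+2}/((n+1)(n+2))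 + (b−x)^{n+2}/(n+2) ] }. -/
open MeasureTheory Set

/-! Integrating by parts `n` times against the kernel `(x - t)ⁿ / n!` rewrites the quantity inside
the absolute value as `∫ₐᵇ (x - t)ⁿ / n! · f⁽ⁿ⁾(t) dt`. Convexity bounds `|f⁽ⁿ⁾(t)|` by its secant
`((b - t) |f⁽ⁿ⁾(a)| + (t - a) |f⁽ⁿ⁾(b)|) / (b - a)`, and the two resulting polynomial integrals are
computed by splitting `[a, b]` at `x`. -/

theorem hasDerivAt_sub_pow_succ_div_factorial (x : ℝ) (m : ℕ) (t : ℝ) :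
    HasDerivAt (fun t => (x - t) ^ (m + 1) / ((m + 1).factorial : ℝ))
      (-((x - t) ^ m / (m.factorial : ℝ))) t := by
  have hlin : HasDerivAt (fun t : ℝ => x - t) (-1) t := by
    simpa using (hasDerivAt_id t).const_sub x
  refine ((hlin.pow (m + 1)).div_const _).congr_deriv ?_
  rw [Nat.factorial_succ, Nat.cast_mul, Nat.add_sub_cancel]
  push_cast
  field_simp

theorem integral_sub_pow_div_factorial_mul_eq {g g' : ℝ → ℝ} {a b : ℝ} (x : ℝ) (m : ℕ)
    (hg : ∀ t ∈ uIcc a b, HasDerivAt g (g' t) t) (hg' : IntervalIntegrable g' volume a b) :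
    ∫ t in a..b, (x - t) ^ m / (m.factorial : ℝ) * g t =
      1 / ((m + 1).factorial : ℝ) *
          ((x - a) ^ (m + 1) * g a + (-1) ^ m * (b - x) ^ (m + 1) * g b) +
        ∫ t in a..b, (x - t) ^ (m + 1) / ((m + 1).factorial : ℝ) * g' t := by
  have hparts := intervalIntegral.integral_mul_deriv_eq_deriv_mul
    (fun t _ => hasDerivAt_sub_pow_succ_div_factorial x m t) hg
    (Continuous.intervalIntegrable (by fun_prop) _ _) hg'
  have hneg : ∫ t in a..b, (x - t) ^ m / (m.factorial : ℝ) * g t =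
      -∫ t in a..b, -((x - t) ^ m / (m.factorial : ℝ)) * g t := by
    simp only [neg_mul, intervalIntegral.integral_neg, neg_neg]
  rw [show x - b = -(b - x) by ring, neg_pow] at hparts
  rw [hneg]
  linear_combination (-1 : ℝ) * hparts

theorem integral_sub_sum_eq_integral_sub_pow_mul_iteratedDeriv (f : ℝ → ℝ) (a b x : ℝ) (n : ℕ)
    (hderiv : ∀ k < n, ∀ t ∈ uIcc a b,
      HasDerivAt (iteratedDeriv k f) (iteratedDeriv (k + 1) f t) t)
    (hint : IntervalIntegrable (iteratedDeriv n f) volume a b) :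
    (∫ t in a..b, f t) -
      ∑ k ∈ Finset.range n, (1 / (Nat.factorial (k + 1) : ℝ)) *
        ((x - a) ^ (k + 1) * iteratedDeriv k f a +
          (-1 : ℝ) ^ k * (b - x) ^ (k + 1) * iteratedDeriv k f b) =
      ∫ t in a..b, (x - t) ^ n / (n.factorial : ℝ) * iteratedDeriv n f t := by
  induction n with
  | zero => simp
  | succ m ih =>
    have hderiv_m : ∀ t ∈ uIcc a b,
        HasDerivAt (iteratedDeriv m f) (iteratedDeriv (m + 1) f t) t := hderiv m m.lt_succ_self
    have hint_m : IntervalIntegrable (iteratedDeriv m f) volume a b :=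
      ContinuousOn.intervalIntegrable fun t ht => (hderiv_m t ht).continuousAt.continuousWithinAt
    rw [Finset.sum_range_succ, sub_add_eq_sub_sub,
      ih (fun k hk => hderiv k (hk.trans m.lt_succ_self)) hint_m,
      integral_sub_pow_div_factorial_mul_eq x m hderiv_m hint]
    ring

theorem ConvexOn.sub_mul_le_secant {f : ℝ → ℝ} {a b t : ℝ} (hf : ConvexOn ℝ (Icc a b) f)
    (ht : t ∈ Icc a b) : (b - a) * f t ≤ (b - t) * f a + (t - a) * f b := by
  obtain ⟨hat, htb⟩ := ht
  rcases (hat.trans htb).eq_or_lt with rfl | hab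
  · obtain rfl : t = a := le_antisymm htb hat
    simp
  have hba : 0 < b - a := sub_pos.2 hab
  have hsecant := hf.2 (left_mem_Icc.2 hab.le) (right_mem_Icc.2 hab.le)
    (div_nonneg (sub_nonneg.2 htb) hba.le) (div_nonneg (sub_nonneg.2 hat) hba.le)
    (by rw [← add_div, div_eq_one_iff_eq hba.ne']; ring)
  have hpoint : ((b - t) / (b - a)) • a + ((t - a) / (b - a)) • b = t := by
    simp only [smul_eq_mul]; field_simp; ring
  rw [hpoint, smul_eq_mul, smul_eq_mul] at hsecant
  calc (b - a) * f t ≤ (b - a) * ((b - t) / (b - a) * f a + (t - a) / (b - a) * f b) :=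
        mul_le_mul_of_nonneg_left hsecant hba.le
    _ = (b - t) * f a + (t - a) * f b := by field_simp

theorem integral_pow_mul_add_mul (n : ℕ) (c d e : ℝ) :
    ∫ u in (0 : ℝ)..c, u ^ n * (d + e * u) =
      d * c ^ (n + 1) / (n + 1) + e * c ^ (n + 2) / (n + 2) := by
  have hsplit : (fun u : ℝ => u ^ n * (d + e * u)) = fun u => d * u ^ n + e * u ^ (n + 1) := by
    funext u; ring
  rw [hsplit, intervalIntegral.integral_add (Continuous.intervalIntegrable (by fun_prop) _ _)
    (Continuous.intervalIntegrable (by fun_prop) _ _), intervalIntegral.integral_const_mul,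
    intervalIntegral.integral_const_mul, integral_pow, integral_pow]
  push_cast
  ring

theorem integral_abs_sub_pow_mul_sub_right {a b x : ℝ} (hx : x ∈ Icc a b) (n : ℕ) :
    ∫ t in a..b, |x - t| ^ n * (b - t) =
      (b - x) * (x - a) ^ (n + 1) / ((n : ℝ) + 1) +
        (b - x) ^ (n + 2) / (((n : ℝ) + 1) * ((n : ℝ) + 2)) +
          (x - a) ^ (n + 2) / ((n : ℝ) + 2) := by
  obtain ⟨hax, hxb⟩ := hx
  have hleft : ∫ t in a..x, |x - t| ^ n * (b - t) =
      ∫ t in a..x, (x - t) ^ n * ((b - x) + 1 * (x - t)) := by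
    refine intervalIntegral.integral_congr fun t ht => ?_
    rw [uIcc_of_le hax] at ht
    rw [abs_of_nonneg (sub_nonneg.2 ht.2)]
    ring
  have hright : ∫ t in x..b, |x - t| ^ n * (b - t) =
      ∫ t in x..b, (t - x) ^ n * ((b - x) + (-1) * (t - x)) := by
    refine intervalIntegral.integral_congr fun t ht => ?_
    rw [uIcc_of_le hxb] at ht
    rw [abs_sub_comm, abs_of_nonneg (sub_nonneg.2 ht.1)]
    ring
  have hcont : Continuous fun t => |x - t| ^ n * (b - t) := by fun_prop
  rw [← intervalIntegral.integral_add_adjacent_intervals (hcont.intervalIntegrable a x)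
      (hcont.intervalIntegrable x b),
    hleft, hright, intervalIntegral.integral_comp_sub_left (fun u => u ^ n * ((b - x) + 1 * u)),
    intervalIntegral.integral_comp_sub_right (fun u => u ^ n * ((b - x) + (-1) * u)), sub_self,
    integral_pow_mul_add_mul, integral_pow_mul_add_mul]
  field_simp
  ring

theorem integral_abs_sub_pow_mul_sub_left {a b x : ℝ} (hx : x ∈ Icc a b) (n : ℕ) :
    ∫ t in a..b, |x - t| ^ n * (t - a) =
      (b - x) ^ (n + 1) * (x - a) / ((n : ℝ) + 1) +
        (x - a) ^ (n + 2) / (((n : ℝ) + 1) * ((n : ℝ) + 2)) +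
          (b - x) ^ (n + 2) / ((n : ℝ) + 2) := by
  have hreflect : a + b - x ∈ Icc a b := ⟨by linarith [hx.2], by linarith [hx.1]⟩
  -- the reflection `t ↦ a + b - t` exchanges `x - a` and `b - x`
  have hright := integral_abs_sub_pow_mul_sub_right hreflect n
  rw [show b - (a + b - x) = x - a by ring, show a + b - x - a = b - x by ring] at hright
  calc ∫ t in a..b, |x - t| ^ n * (t - a)
      = ∫ t in a..b, |x - (a + b - t)| ^ n * (a + b - t - a) := by
        simpa using (intervalIntegral.integral_comp_sub_left
          (fun t => |x - t| ^ n * (t - a)) (a + b) (a := a) (b := b)).symm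
    _ = ∫ t in a..b, |a + b - x - t| ^ n * (b - t) := by
        congr 1 with t
        rw [abs_sub_comm]
        ring_nf
    _ = _ := by rw [hright]; ring

theorem abs_integral_sub_sum_le_of_convexOn_abs_iteratedDeriv_general
    (f : ℝ → ℝ) (a b : ℝ) (hab : a < b) (n : ℕ)
    (hderiv : ∀ k < n, ∀ t ∈ Icc a b,
      HasDerivAt (iteratedDeriv k f) (iteratedDeriv (k + 1) f t) t)
    (hint : IntervalIntegrable (iteratedDeriv n f) volume a b)
    (hconv : ConvexOn ℝ (Icc a b) (fun t => |iteratedDeriv n f t|))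
    (x : ℝ) (hx : x ∈ Icc a b) :
    |(∫ t in a..b, f t) -
      ∑ k ∈ Finset.range n, (1 / (Nat.factorial (k + 1) : ℝ)) *
        ((x - a) ^ (k + 1) * iteratedDeriv k f a +
          (-1 : ℝ) ^ k * (b - x) ^ (k + 1) * iteratedDeriv k f b)| ≤
      (1 / ((Nat.factorial n : ℝ) * (b - a))) *
        (|iteratedDeriv n f a| *
          ((b - x) * (x - a) ^ (n + 1) / ((n : ℝ) + 1) +
            (b - x) ^ (n + 2) / (((n : ℝ) + 1) * ((n : ℝ) + 2)) +
            (x - a) ^ (n + 2) / ((n : ℝ) + 2)) +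
        |iteratedDeriv n f b| *
          ((b - x) ^ (n + 1) * (x - a) / ((n : ℝ) + 1) +
            (x - a) ^ (n + 2) / (((n : ℝ) + 1) * ((n : ℝ) + 2)) +
            (b - x) ^ (n + 2) / ((n : ℝ) + 2))) := by
  rw [← uIcc_of_le hab.le] at hderiv
  rw [integral_sub_sum_eq_integral_sub_pow_mul_iteratedDeriv f a b x n hderiv hint]
  set A := |iteratedDeriv n f a|
  set B := |iteratedDeriv n f b|
  have hba : 0 < b - a := sub_pos.2 hab
  set C := (Nat.factorial n : ℝ) * (b - a)
  have hC : 0 < C := by positivity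
  have hbound : ∀ t ∈ Icc a b, |(x - t) ^ n / (n.factorial : ℝ) * iteratedDeriv n f t| ≤
      |x - t| ^ n * (b - t) * (A / C) + |x - t| ^ n * (t - a) * (B / C) := by
    intro t ht
    have hsecant := hconv.sub_mul_le_secant ht
    calc |(x - t) ^ n / (n.factorial : ℝ) * iteratedDeriv n f t|
        = |x - t| ^ n / C * ((b - a) * |iteratedDeriv n f t|) := by
          rw [abs_mul, abs_div, abs_pow, Nat.abs_cast]
          field_simp [hba.ne']
          ring
      _ ≤ |x - t| ^ n / C * ((b - t) * A + (t - a) * B) := by gcongr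
      _ = _ := by ring
  have hcont : ∀ g : ℝ → ℝ, Continuous g → IntervalIntegrable g volume a b :=
    fun g hg => hg.intervalIntegrable a b
  calc |∫ t in a..b, (x - t) ^ n / (n.factorial : ℝ) * iteratedDeriv n f t|
      ≤ ∫ t in a..b, |(x - t) ^ n / (n.factorial : ℝ) * iteratedDeriv n f t| :=
        intervalIntegral.abs_integral_le_integral_abs hab.le
    _ ≤ ∫ t in a..b, (|x - t| ^ n * (b - t) * (A / C) + |x - t| ^ n * (t - a) * (B / C)) :=
        intervalIntegral.integral_mono_on hab.le (hint.continuousOn_mul (by fun_prop)).abs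
          (hcont _ (by fun_prop)) hbound
    _ = _ := by
        rw [intervalIntegral.integral_add (hcont _ (by fun_prop)) (hcont _ (by fun_prop)),
          intervalIntegral.integral_mul_const, intervalIntegral.integral_mul_const,
          integral_abs_sub_pow_mul_sub_right hx, integral_abs_sub_pow_mul_sub_left hx]
        ring

/-- **Theorem.** If `f^(n-1)` (`n ≥ 1`) is absolutely continuous on `[a, b]` and `|f^(n)|` is
convex on `[a, b]`, then for all `x ∈ [a, b]` the stated bound for
`|∫_a^b f - ∑_{k=0}^{n-1} (1/(k+1)!) [(x-a)^{k+1} f^(k)(a) + (-1)^k (b-x)^{k+1} f^(k)(b)]|`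
holds. -/
theorem abs_integral_sub_sum_le_of_convexOn_abs_iteratedDeriv
    (f : ℝ → ℝ) (a b : ℝ) (hab : a < b) (n : ℕ) (hn : 1 ≤ n)
    (hderiv : ∀ k < n, ∀ t ∈ Icc a b,
      HasDerivAt (iteratedDeriv k f) (iteratedDeriv (k + 1) f t) t)
    (hint : IntervalIntegrable (iteratedDeriv n f) volume a b)
    (hconv : ConvexOn ℝ (Icc a b) (fun t => |iteratedDeriv n f t|))
    (x : ℝ) (hx : x ∈ Icc a b) :
    |(∫ t in a..b, f t) -
      ∑ k ∈ Finset.range n, (1 / (Nat.factorial (k + 1) : ℝ)) *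
        ((x - a) ^ (k + 1) * iteratedDeriv k f a +
          (-1 : ℝ) ^ k * (b - x) ^ (k + 1) * iteratedDeriv k f b)| ≤
      (1 / ((Nat.factorial n : ℝ) * (b - a))) *
        (|iteratedDeriv n f a| *
          ((b - x) * (x - a) ^ (n + 1) / ((n : ℝ) + 1) +
            (b - x) ^ (n + 2) / (((n : ℝ) + 1) * ((n : ℝ) + 2)) +
            (x - a) ^ (n + 2) / ((n : ℝ) + 2)) +
        |iteratedDeriv n f b| *
          ((b - x) ^ (n + 1) * (x - a) / ((n : ℝ) + 1) +
            (x - a) ^ (n + 2) / (((n : ℝ) + 1) * ((n : ℝ) + 2)) +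
            (b - x) ^ (n + 2) / ((n : ℝ) + 2))) :=
  abs_integral_sub_sum_le_of_convexOn_abs_iteratedDeriv_general f a b hab n hderiv hint hconv x hx
end

section
/- Let f : [a,b] → ℝ be a mapping such that the (n−1)-th derivative f^(n−1) (n ≥ 1) is absolutely continuous on [a,b]. If |f^(n)| is convex on [a,b], then: | ∫_a^b f(t) dt − Σ_{k=0}^{n−1} (1/(k+1)!) ((b−a)/2)^{k+1} [ f^(k)(a) + (−1)^k f^(k)(b) ] | ≤ ((b−a)^{n+1} / (2^{n+1} (n+1)!)) [ |f^(n)(a)| + |f^(n)(b)| ]. -/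
open MeasureTheory Set intervalIntegral

/-!
Integrating by parts `n` times against the kernels `(t - x) ^ k / k!`, with `x` the midpoint,
turns the left-hand side into `|∫ (t - x) ^ n / n! * f⁽ⁿ⁾ t|`. Convexity bounds `|f⁽ⁿ⁾ t|` by
its chord `((b - t) |f⁽ⁿ⁾ a| + (t - a) |f⁽ⁿ⁾ b|) / (b - a)`, which is the constant
`(|f⁽ⁿ⁾ a| + |f⁽ⁿ⁾ b|) / 2` plus a multiple of `t - x`; against the even weight `|t - x| ^ n`
the odd part integrates to zero, and `∫ |t - x| ^ n` gives the constant.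
-/

theorem hasDerivAt_pow_sub_div_factorial (x t : ℝ) (m : ℕ) :
    HasDerivAt (fun s => (s - x) ^ (m + 1) / (m + 1).factorial)
      ((t - x) ^ m / m.factorial) t := by
  refine ((((hasDerivAt_id t).sub_const x).pow (m + 1)).div_const _).congr_deriv ?_
  rw [Nat.factorial_succ]
  push_cast
  field_simp
  simp

theorem integral_pow_sub_div_factorial_mul_deriv {g g' : ℝ → ℝ} {a b : ℝ}
    (hg : ∀ t ∈ uIcc a b, HasDerivAt g (g' t) t) (hg' : IntervalIntegrable g' volume a b)
    (x : ℝ) (m : ℕ) :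
    ∫ t in a..b, (t - x) ^ (m + 1) / (m + 1).factorial * g' t =
      ((b - x) ^ (m + 1) * g b - (a - x) ^ (m + 1) * g a) / (m + 1).factorial -
        ∫ t in a..b, (t - x) ^ m / m.factorial * g t := by
  rw [integral_mul_deriv_eq_deriv_mul (fun t _ => hasDerivAt_pow_sub_div_factorial x t m) hg
    (by apply Continuous.intervalIntegrable; fun_prop) hg']
  ring

theorem integral_sub_sum_eq_integral_pow_mul_iteratedDeriv (f : ℝ → ℝ) (a b x : ℝ) (n : ℕ)
    (hderiv : ∀ k < n, ∀ t ∈ uIcc a b,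
      HasDerivAt (iteratedDeriv k f) (iteratedDeriv (k + 1) f t) t)
    (hint : IntervalIntegrable (iteratedDeriv n f) volume a b) :
    (∫ t in a..b, f t) - ∑ k ∈ Finset.range n,
        ((x - a) ^ (k + 1) * iteratedDeriv k f a + (-1) ^ k * (b - x) ^ (k + 1) *
          iteratedDeriv k f b) / (k + 1).factorial =
      (-1) ^ n * ∫ t in a..b, (t - x) ^ n / n.factorial * iteratedDeriv n f t := by
  induction n with
  | zero => simp
  | succ m ih =>
    have hm := hderiv m m.lt_succ_self
    have hint_m : IntervalIntegrable (iteratedDeriv m f) volume a b :=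
      ContinuousOn.intervalIntegrable fun t ht => (hm t ht).continuousAt.continuousWithinAt
    rw [Finset.sum_range_succ, ← sub_sub, ih (fun k hk => hderiv k (by omega)) hint_m,
      integral_pow_sub_div_factorial_mul_deriv hm hint x m]
    have hpow : (a - x) ^ (m + 1) = (-1) ^ (m + 1) * (x - a) ^ (m + 1) := by
      rw [← mul_pow]; ring
    have hsq : ((-1 : ℝ) ^ (m + 1)) * (-1) ^ (m + 1) = 1 := by rw [← mul_pow]; norm_num
    rw [hpow]
    linear_combination (x - a) ^ (m + 1) * iteratedDeriv m f a / (m + 1).factorial * hsq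

theorem ConvexOn.le_secant {f : ℝ → ℝ} {a b t : ℝ} (hf : ConvexOn ℝ (Icc a b) f) (hab : a < b)
    (ht : t ∈ Icc a b) : f t ≤ ((b - t) * f a + (t - a) * f b) / (b - a) := by
  have hba : b - a ≠ 0 := (sub_pos.2 hab).ne'
  have h := hf.2 (left_mem_Icc.2 hab.le) (right_mem_Icc.2 hab.le)
    (div_nonneg (sub_nonneg.2 ht.2) (sub_nonneg.2 hab.le))
    (div_nonneg (sub_nonneg.2 ht.1) (sub_nonneg.2 hab.le)) (by field_simp; ring)
  have hpoint : ((b - t) / (b - a)) • a + ((t - a) / (b - a)) • b = t := by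
    simp only [smul_eq_mul]; field_simp; ring
  rw [hpoint] at h
  simpa only [smul_eq_mul, add_div, mul_div_right_comm] using h

theorem integral_abs_pow_symm (h : ℝ) (hh : 0 ≤ h) (n : ℕ) :
    ∫ s in -h..h, |s| ^ n = 2 * h ^ (n + 1) / (n + 1) := by
  have hc : Continuous fun s : ℝ => |s| ^ n := by fun_prop
  have hright : ∫ s in (0)..h, |s| ^ n = h ^ (n + 1) / (n + 1) := by
    rw [integral_of_le hh, ← uIoc_of_le hh]
    simpa [abs_of_nonneg hh] using integral_pow_abs_sub_uIoc (a := 0) (b := h) (n := n)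
  rw [← integral_add_adjacent_intervals (hc.intervalIntegrable _ 0) (hc.intervalIntegrable 0 h)]
  have hleft : ∫ s in -h..0, |s| ^ n = ∫ s in (0)..h, |s| ^ n := by
    simpa using (integral_comp_neg (a := 0) (b := h) (fun s : ℝ => |s| ^ n)).symm
  rw [hleft, hright]; ring

theorem integral_abs_pow_mul_affine_symm (h c d : ℝ) (hh : 0 ≤ h) (n : ℕ) :
    ∫ s in -h..h, |s| ^ n * (c + d * s) = 2 * c * h ^ (n + 1) / (n + 1) := by
  have hc : Continuous fun s : ℝ => |s| ^ n * (c + d * s) := by fun_prop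
  have hc' : Continuous fun s : ℝ => |s| ^ n * (c - d * s) := by fun_prop
  have hrefl : ∫ s in -h..h, |s| ^ n * (c + d * s) = ∫ s in -h..h, |s| ^ n * (c - d * s) := by
    simpa [abs_neg, neg_neg, mul_neg, ← sub_eq_add_neg] using
      (integral_comp_neg (a := -h) (b := h) (fun s : ℝ => |s| ^ n * (c + d * s))).symm
  have hsum : (∫ s in -h..h, |s| ^ n * (c + d * s)) + ∫ s in -h..h, |s| ^ n * (c - d * s) =
      2 * c * ∫ s in -h..h, |s| ^ n := by
    rw [← integral_add (hc.intervalIntegrable _ _) (hc'.intervalIntegrable _ _),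
      ← intervalIntegral.integral_const_mul]
    congr 1; ext s; ring
  rw [integral_abs_pow_symm h hh] at hsum
  linear_combination hsum / 2 + hrefl / 2

theorem integral_abs_sub_midpoint_pow_mul_affine {a b : ℝ} (hab : a ≤ b) (c d : ℝ) (n : ℕ) :
    ∫ t in a..b, |t - (a + b) / 2| ^ n * (c + d * (t - (a + b) / 2)) =
      2 * c * ((b - a) / 2) ^ (n + 1) / (n + 1) := by
  rw [integral_comp_sub_right (fun s => |s| ^ n * (c + d * s)),
    show a - (a + b) / 2 = -((b - a) / 2) by ring, show b - (a + b) / 2 = (b - a) / 2 by ring]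
  exact integral_abs_pow_mul_affine_symm _ c d (by linarith) n

theorem abs_integral_pow_sub_midpoint_mul_le {g : ℝ → ℝ} {a b : ℝ} (hab : a < b)
    (hg : IntervalIntegrable g volume a b) (hconv : ConvexOn ℝ (Icc a b) fun t => |g t|)
    (n : ℕ) :
    |∫ t in a..b, (t - (a + b) / 2) ^ n / n.factorial * g t| ≤
      (b - a) ^ (n + 1) / (2 ^ (n + 1) * (n + 1).factorial) * (|g a| + |g b|) := by
  set x := (a + b) / 2
  have hba : b - a ≠ 0 := (sub_pos.2 hab).ne'
  have hpeano : Continuous fun t => (t - x) ^ n / n.factorial := by fun_prop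
  have hpointwise : ∀ t ∈ Icc a b, |(t - x) ^ n / n.factorial * g t| ≤
      1 / (n.factorial * (b - a)) * (|t - x| ^ n *
        ((|g a| + |g b|) * ((b - a) / 2) + (|g b| - |g a|) * (t - x))) := by
    intro t ht
    rw [abs_mul, abs_div, abs_pow, Nat.abs_cast]
    calc |t - x| ^ n / n.factorial * |g t|
        ≤ |t - x| ^ n / n.factorial * (((b - t) * |g a| + (t - a) * |g b|) / (b - a)) := by
          gcongr; exact hconv.le_secant hab ht
      _ = _ := by simp only [x]; field_simp; ring
  calc |∫ t in a..b, (t - x) ^ n / n.factorial * g t|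
      ≤ ∫ t in a..b, |(t - x) ^ n / n.factorial * g t| := abs_integral_le_integral_abs hab.le
    _ ≤ ∫ t in a..b, 1 / (n.factorial * (b - a)) * (|t - x| ^ n *
          ((|g a| + |g b|) * ((b - a) / 2) + (|g b| - |g a|) * (t - x))) :=
        integral_mono_on hab.le (hg.continuousOn_mul hpeano.continuousOn).abs
          (Continuous.intervalIntegrable (by fun_prop) _ _) hpointwise
    _ = _ := by
      rw [intervalIntegral.integral_const_mul, integral_abs_sub_midpoint_pow_mul_affine hab.le,
        Nat.factorial_succ, div_pow]
      push_cast
      field_simp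

theorem abs_integral_sub_sum_midpoint_le_of_convexOn_abs_iteratedDeriv_general
    (f : ℝ → ℝ) (a b : ℝ) (hab : a < b) (n : ℕ)
    (hderiv : ∀ k < n, ∀ t ∈ Icc a b,
      HasDerivAt (iteratedDeriv k f) (iteratedDeriv (k + 1) f t) t)
    (hint : IntervalIntegrable (iteratedDeriv n f) volume a b)
    (hconv : ConvexOn ℝ (Icc a b) (fun t => |iteratedDeriv n f t|)) :
    |(∫ t in a..b, f t) -
      ∑ k ∈ Finset.range n, (1 / (Nat.factorial (k + 1) : ℝ)) * ((b - a) / 2) ^ (k + 1) *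
        (iteratedDeriv k f a + (-1 : ℝ) ^ k * iteratedDeriv k f b)| ≤
      ((b - a) ^ (n + 1) / (2 ^ (n + 1) * (Nat.factorial (n + 1) : ℝ))) *
        (|iteratedDeriv n f a| + |iteratedDeriv n f b|) := by
  have htaylor := integral_sub_sum_eq_integral_pow_mul_iteratedDeriv f a b ((a + b) / 2) n
    (by rwa [uIcc_of_le hab.le]) hint
  have hsum : ∀ k ∈ Finset.range n,
      (((a + b) / 2 - a) ^ (k + 1) * iteratedDeriv k f a +
          (-1) ^ k * (b - (a + b) / 2) ^ (k + 1) * iteratedDeriv k f b) / (k + 1).factorial =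
        1 / ((k + 1).factorial : ℝ) * ((b - a) / 2) ^ (k + 1) *
          (iteratedDeriv k f a + (-1) ^ k * iteratedDeriv k f b) := by
    intro k _
    rw [show (a + b) / 2 - a = (b - a) / 2 by ring, show b - (a + b) / 2 = (b - a) / 2 by ring]
    ring
  rw [← Finset.sum_congr rfl hsum, htaylor, abs_mul, abs_pow, abs_neg, abs_one, one_pow, one_mul]
  exact abs_integral_pow_sub_midpoint_mul_le hab hint hconv n

/-- **Corollary (midpoint case `x = (a+b)/2`).** If `f^(n-1)` (`n ≥ 1`) is absolutely continuous
on `[a, b]` and `|f^(n)|` is convex on `[a, b]`, then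
`|∫_a^b f - ∑_{k=0}^{n-1} (1/(k+1)!) ((b-a)/2)^{k+1} [f^(k)(a) + (-1)^k f^(k)(b)]|
  ≤ ((b-a)^{n+1} / (2^{n+1} (n+1)!)) (|f^(n)(a)| + |f^(n)(b)|)`. -/
theorem abs_integral_sub_sum_midpoint_le_of_convexOn_abs_iteratedDeriv
    (f : ℝ → ℝ) (a b : ℝ) (hab : a < b) (n : ℕ) (hn : 1 ≤ n)
    (hderiv : ∀ k < n, ∀ t ∈ Icc a b,
      HasDerivAt (iteratedDeriv k f) (iteratedDeriv (k + 1) f t) t)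
    (hint : IntervalIntegrable (iteratedDeriv n f) volume a b)
    (hconv : ConvexOn ℝ (Icc a b) (fun t => |iteratedDeriv n f t|)) :
    |(∫ t in a..b, f t) -
      ∑ k ∈ Finset.range n, (1 / (Nat.factorial (k + 1) : ℝ)) * ((b - a) / 2) ^ (k + 1) *
        (iteratedDeriv k f a + (-1 : ℝ) ^ k * iteratedDeriv k f b)| ≤
      ((b - a) ^ (n + 1) / (2 ^ (n + 1) * (Nat.factorial (n + 1) : ℝ))) *
        (|iteratedDeriv n f a| + |iteratedDeriv n f b|) :=
  abs_integral_sub_sum_midpoint_le_of_convexOn_abs_iteratedDeriv_general f a b hab n hderiv hint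
    hconv
end

section
/- Let f : [a,b] → ℝ be absolutely continuous on [a,b] with derivative f′, and suppose |f′| is convex on [a,b]. Then for all x ∈ [a,b]: | ∫_a^b f(t) dt − { (x−a) f(a) + (b−x) f(b) } | ≤ |f′(a)| [ ((b−x)^3 + (x−a)^2 (3b−2a−x)) / (6(b−a)) ] + |f′(b)| [ ((x−a)^3 + (b−x)^2 (2b+x−3a)) / (6(b−a)) ]. -/
/-!
Integrating by parts against the kernel `t - x` gives
`∫_a^b f - ((x - a) f(a) + (b - x) f(b)) = -∫_a^b (t - x) f'(t) dt`.
Convexity bounds `|f'|` on `[a, b]` by its chord through `(a, |f'(a)|)` and `(b, |f'(b)|)`,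
and the resulting integral `∫_a^b |t - x| · chord(t) dt` is computed exactly by splitting at `x`.
-/

open MeasureTheory Set

theorem ConvexOn.sub_mul_le_of_mem_Icc {s : Set ℝ} {f : ℝ → ℝ} (hf : ConvexOn ℝ s f)
    {x y z : ℝ} (hx : x ∈ s) (hz : z ∈ s) (hy : y ∈ Icc x z) :
    (z - x) * f y ≤ (z - y) * f x + (y - x) * f z := by
  rcases hy.1.eq_or_lt with rfl | hxy
  · simp
  rcases hy.2.eq_or_lt with rfl | hyz
  · simp
  exact hf.secant_mono_aux1 hx hz hxy hyz

theorem integral_eq_trapezoid_sub_integral_sub_mul_deriv {f f' : ℝ → ℝ} {a b : ℝ}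
    (hderiv : ∀ t ∈ uIcc a b, HasDerivAt f (f' t) t) (hint : IntervalIntegrable f' volume a b)
    (x : ℝ) :
    ∫ t in a..b, f t = (x - a) * f a + (b - x) * f b - ∫ t in a..b, (t - x) * f' t := by
  have hparts := intervalIntegral.integral_mul_deriv_eq_deriv_mul
    (fun t _ => (hasDerivAt_id t).sub_const x) hderiv intervalIntegrable_const hint
  simp only [id, one_mul] at hparts
  rw [hparts]
  ring

theorem integral_sub_mul_sub (x q c d : ℝ) :
    ∫ t in c..d, (t - x) * (t - q) =
      (d - x) ^ 2 * (2 * d - 3 * q + x) / 6 - (c - x) ^ 2 * (2 * c - 3 * q + x) / 6 := by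
  refine intervalIntegral.integral_eq_sub_of_hasDerivAt
    (f := fun t => (t - x) ^ 2 * (2 * t - 3 * q + x) / 6) (fun t _ => ?_)
    (Continuous.intervalIntegrable (by fun_prop) c d)
  have hF := (((hasDerivAt_id' t).sub_const x).fun_pow 2).fun_mul
    (((hasDerivAt_id' t).const_mul 2).sub_const (3 * q) |>.add_const x) |>.div_const 6
  refine hF.congr_deriv ?_
  push_cast
  ring

theorem integral_abs_sub_mul_sub {a b x : ℝ} (hx : x ∈ Icc a b) (q : ℝ) :
    ∫ t in a..b, |t - x| * (t - q) =
      ((a - x) ^ 2 * (2 * a - 3 * q + x) + (b - x) ^ 2 * (2 * b - 3 * q + x)) / 6 := by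
  have hcont : ∀ c d, IntervalIntegrable (fun t => |t - x| * (t - q)) volume c d :=
    fun c d => Continuous.intervalIntegrable (by fun_prop) c d
  have hleft : ∫ t in a..x, |t - x| * (t - q) = -∫ t in a..x, (t - x) * (t - q) := by
    rw [← intervalIntegral.integral_neg]
    refine intervalIntegral.integral_congr fun t ht => ?_
    rw [uIcc_of_le hx.1] at ht
    simp only [abs_of_nonpos (sub_nonpos.2 ht.2)]
    ring
  have hright : ∫ t in x..b, |t - x| * (t - q) = ∫ t in x..b, (t - x) * (t - q) := by
    refine intervalIntegral.integral_congr fun t ht => ?_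
    rw [uIcc_of_le hx.2] at ht
    simp only [abs_of_nonneg (sub_nonneg.2 ht.1)]
  rw [← intervalIntegral.integral_add_adjacent_intervals (hcont a x) (hcont x b), hleft, hright,
    integral_sub_mul_sub, integral_sub_mul_sub]
  ring

theorem integral_abs_sub_mul_chord {a b x : ℝ} (hx : x ∈ Icc a b) (A B : ℝ) :
    ∫ t in a..b, |t - x| * (((b - t) * A + (t - a) * B) / (b - a)) =
      A * (((b - x) ^ 3 + (x - a) ^ 2 * (3 * b - 2 * a - x)) / (6 * (b - a))) +
      B * (((x - a) ^ 3 + (b - x) ^ 2 * (2 * b + x - 3 * a)) / (6 * (b - a))) := by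
  have hcont : ∀ q, IntervalIntegrable (fun t => |t - x| * (t - q)) volume a b :=
    fun q => Continuous.intervalIntegrable (by fun_prop) a b
  have hsplit : ∀ t, |t - x| * (((b - t) * A + (t - a) * B) / (b - a)) =
      B / (b - a) * (|t - x| * (t - a)) - A / (b - a) * (|t - x| * (t - b)) :=
    fun t => by ring
  simp only [hsplit]
  rw [intervalIntegral.integral_sub ((hcont a).const_mul _) ((hcont b).const_mul _),
    intervalIntegral.integral_const_mul, intervalIntegral.integral_const_mul,
    integral_abs_sub_mul_sub hx, integral_abs_sub_mul_sub hx, mul_comm 6 (b - a),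
    ← div_div, ← div_div]
  ring

/-- **Corollary (case `n = 1`).** If `f` is absolutely continuous on `[a, b]` with derivative
`f'` (formalized: `f` has derivative `f' t` at every `t ∈ [a, b]` and `f'` is integrable on
`[a, b]`) and `|f'|` is convex on `[a, b]`, then for all `x ∈ [a, b]`,
`|∫_a^b f - ((x-a) f(a) + (b-x) f(b))|
  ≤ |f'(a)| ((b-x)^3 + (x-a)^2 (3b-2a-x)) / (6(b-a))
    + |f'(b)| ((x-a)^3 + (b-x)^2 (2b+x-3a)) / (6(b-a))`. -/
theorem abs_integral_sub_trapezoid_le_of_convexOn_abs_deriv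
    (f f' : ℝ → ℝ) (a b : ℝ) (hab : a < b)
    (hderiv : ∀ t ∈ Icc a b, HasDerivAt f (f' t) t)
    (hint : IntervalIntegrable f' volume a b)
    (hconv : ConvexOn ℝ (Icc a b) (fun t => |f' t|))
    (x : ℝ) (hx : x ∈ Icc a b) :
    |(∫ t in a..b, f t) - ((x - a) * f a + (b - x) * f b)| ≤
      |f' a| * (((b - x) ^ 3 + (x - a) ^ 2 * (3 * b - 2 * a - x)) / (6 * (b - a))) +
      |f' b| * (((x - a) ^ 3 + (b - x) ^ 2 * (2 * b + x - 3 * a)) / (6 * (b - a))) := by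
  rw [← uIcc_of_le hab.le] at hderiv
  have hchord : ∀ t ∈ Icc a b, |f' t| ≤ ((b - t) * |f' a| + (t - a) * |f' b|) / (b - a) :=
    fun t ht => (le_div_iff₀ (sub_pos.2 hab)).2 <| by
      linarith [hconv.sub_mul_le_of_mem_Icc (left_mem_Icc.2 hab.le) (right_mem_Icc.2 hab.le) ht]
  have hkernel : IntervalIntegrable (fun t => |t - x| * |f' t|) volume a b := by
    simpa only [abs_mul] using
      (hint.continuousOn_mul (g := fun t => t - x) (by fun_prop)).abs
  calc |(∫ t in a..b, f t) - ((x - a) * f a + (b - x) * f b)|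
      = |∫ t in a..b, (t - x) * f' t| := by
        rw [integral_eq_trapezoid_sub_integral_sub_mul_deriv hderiv hint x, sub_sub_cancel_left,
          abs_neg]
    _ ≤ ∫ t in a..b, |t - x| * |f' t| := by
        simpa only [abs_mul] using intervalIntegral.abs_integral_le_integral_abs
          (f := fun t => (t - x) * f' t) hab.le
    _ ≤ ∫ t in a..b, |t - x| * (((b - t) * |f' a| + (t - a) * |f' b|) / (b - a)) :=
        intervalIntegral.integral_mono_on hab.le hkernel
          (Continuous.intervalIntegrable (by fun_prop) a b)
          fun t ht => mul_le_mul_of_nonneg_left (hchord t ht) (abs_nonneg _)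
    _ = _ := integral_abs_sub_mul_chord hx _ _
end

section
/- Let f : [a,b] → ℝ be absolutely continuous on [a,b] with derivative f′, let p > 1 and q satisfy 1/p + 1/q = 1, and suppose |f′|^q is convex on [a,b]. Then: | (f(a)+f(b))/2 − (1/(b−a)) ∫_a^b f(t) dt | ≤ (2/(p+1))^{1/p} · ((b−a)/4) · ( |f′(a)|^q + |f′(b)|^q )^{1/q}. -/
/-!
Integrating by parts against the kernel `t - (a + b) / 2` turns the trapezoid error into
`(b - a)⁻¹ ∫ (t - (a + b) / 2) f'(t) dt`. Hölder's inequality bounds this by the `p`-th moment of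
the kernel, which is `2 / (p + 1) * ((b - a) / 2) ^ (p + 1)`, times `(∫ |f'| ^ q) ^ (1 / q)`; since
`|f'| ^ q` is convex, the right half of the Hermite–Hadamard inequality bounds `∫ |f'| ^ q` by
`(b - a) / 2 * (|f' a| ^ q + |f' b| ^ q)`.
-/

open MeasureTheory Set intervalIntegral

theorem integral_sub_midpoint_mul_deriv_eq {f f' : ℝ → ℝ} {a b : ℝ}
    (hderiv : ∀ t ∈ uIcc a b, HasDerivAt f (f' t) t) (hint : IntervalIntegrable f' volume a b) :
    ∫ t in a..b, (t - (a + b) / 2) * f' t = (b - a) * ((f a + f b) / 2) - ∫ t in a..b, f t := by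
  rw [integral_mul_deriv_eq_deriv_mul (u := fun t => t - (a + b) / 2)
    (fun t _ => (hasDerivAt_id t).sub_const _) hderiv
    intervalIntegrable_const hint]
  simp only [one_mul]
  ring

theorem abs_intervalIntegral_mul_le_Lp_mul_Lq {f g : ℝ → ℝ} {a b p q : ℝ} (hab : a ≤ b)
    (hpq : p.HolderConjugate q) (hf : MemLp f (ENNReal.ofReal p) (volume.restrict (Ioc a b)))
    (hg : MemLp g (ENNReal.ofReal q) (volume.restrict (Ioc a b))) :
    |∫ t in a..b, f t * g t| ≤
      (∫ t in a..b, |f t| ^ p) ^ (1 / p) * (∫ t in a..b, |g t| ^ q) ^ (1 / q) := by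
  simp only [integral_of_le hab, ← Real.norm_eq_abs]
  refine (MeasureTheory.norm_integral_le_integral_norm _).trans ?_
  simpa only [norm_mul] using integral_mul_norm_le_Lp_mul_Lq hpq hf hg

theorem integral_abs_sub_rpow_of_mem_Icc {a b c p : ℝ} (hp : 0 ≤ p) (hc : c ∈ Icc a b) :
    ∫ t in a..b, |t - c| ^ p = ((c - a) ^ (p + 1) + (b - c) ^ (p + 1)) / (p + 1) := by
  have hcont : Continuous fun t : ℝ => |t - c| ^ p := by fun_prop (disch := exact Or.inr hp)
  have hleft : ∫ t in a..c, |t - c| ^ p = (c - a) ^ (p + 1) / (p + 1) := by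
    rw [integral_congr (g := fun t => (c - t) ^ p) fun t ht => by
      rw [abs_sub_comm, abs_of_nonneg (by linarith [(uIcc_of_le hc.1 ▸ ht).2])]]
    simp [integral_comp_sub_left (fun s : ℝ => s ^ p), integral_rpow (Or.inl (by linarith : -1 < p)),
      Real.zero_rpow (by linarith : p + 1 ≠ 0)]
  have hright : ∫ t in c..b, |t - c| ^ p = (b - c) ^ (p + 1) / (p + 1) := by
    rw [integral_congr (g := fun t => (t - c) ^ p) fun t ht => by
      rw [abs_of_nonneg (by linarith [(uIcc_of_le hc.2 ▸ ht).1])]]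
    simp [integral_comp_sub_right (fun s : ℝ => s ^ p), integral_rpow (Or.inl (by linarith : -1 < p)),
      Real.zero_rpow (by linarith : p + 1 ≠ 0)]
  rw [← integral_add_adjacent_intervals (hcont.intervalIntegrable a c) (hcont.intervalIntegrable c b),
    hleft, hright, add_div]

theorem abs_integral_sub_midpoint_mul_le {g : ℝ → ℝ} {a b p q : ℝ} (hab : a ≤ b)
    (hpq : p.HolderConjugate q) (hg : MemLp g (ENNReal.ofReal q) (volume.restrict (Ioc a b))) :
    |∫ t in a..b, (t - (a + b) / 2) * g t| ≤
      (2 / (p + 1) * ((b - a) / 2) ^ (p + 1)) ^ (1 / p) * (∫ t in a..b, |g t| ^ q) ^ (1 / q) := by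
  have hkernel : MemLp (fun t => t - (a + b) / 2) (ENNReal.ofReal p) (volume.restrict (Ioc a b)) :=
    .of_bound (by fun_prop) (b - a) <| (ae_restrict_iff' measurableSet_Ioc).2 <|
      .of_forall fun t ht => by rw [Real.norm_eq_abs, abs_le]; constructor <;> linarith [ht.1, ht.2]
  have hmoment : ∫ t in a..b, |t - (a + b) / 2| ^ p = 2 / (p + 1) * ((b - a) / 2) ^ (p + 1) := by
    rw [integral_abs_sub_rpow_of_mem_Icc hpq.nonneg ⟨by linarith, by linarith⟩]
    ring_nf
  simpa only [hmoment] using abs_intervalIntegral_mul_le_Lp_mul_Lq hab hpq hkernel hg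

theorem ConvexOn.map_add_map_reflect_le {g : ℝ → ℝ} {a b t : ℝ} (hg : ConvexOn ℝ (Icc a b) g)
    (ht : t ∈ Icc a b) : g t + g (a + b - t) ≤ g a + g b := by
  have hab : a ≤ b := ht.1.trans ht.2
  obtain ⟨θ, μ, hθ, hμ, hθμ, rfl⟩ := (segment_eq_Icc (𝕜 := ℝ) hab).symm ▸ ht
  have hreflect : a + b - (θ • a + μ • b) = μ • a + θ • b := by
    simp only [smul_eq_mul]; linear_combination (-(a + b)) * hθμ
  have h₁ := hg.2 (left_mem_Icc.2 hab) (right_mem_Icc.2 hab) hθ hμ hθμ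
  have h₂ := hg.2 (left_mem_Icc.2 hab) (right_mem_Icc.2 hab) hμ hθ (by rw [add_comm, hθμ])
  rw [hreflect]
  simp only [smul_eq_mul] at h₁ h₂ ⊢
  linear_combination h₁ + h₂ + (g a + g b) * hθμ

-- Right half of the Hermite–Hadamard inequality: pair `g t` with its reflection `g (a + b - t)`.
theorem ConvexOn.intervalIntegral_le_mul_add_div_two {g : ℝ → ℝ} {a b : ℝ} (hab : a ≤ b)
    (hg : ConvexOn ℝ (Icc a b) g) (hint : IntervalIntegrable g volume a b) :
    ∫ t in a..b, g t ≤ (b - a) * ((g a + g b) / 2) := by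
  have hint_reflect : IntervalIntegrable (fun t => g (a + b - t)) volume a b := by
    simpa using (hint.comp_sub_left (a + b)).symm
  have hreflect : ∫ t in a..b, g (a + b - t) = ∫ t in a..b, g t := by
    simp [integral_comp_sub_left g (a + b)]
  have hsum : ∫ t in a..b, (g t + g (a + b - t)) ≤ ∫ _ in a..b, (g a + g b) :=
    integral_mono_on hab (hint.add hint_reflect) intervalIntegrable_const
      fun t ht => hg.map_add_map_reflect_le ht
  rw [integral_add hint hint_reflect, hreflect, intervalIntegral.integral_const, smul_eq_mul] at hsum
  linarith

-- `|g| ^ q` is bounded by its larger endpoint value, being convex.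
theorem memLp_of_convexOn_rpow_abs {g : ℝ → ℝ} {a b q : ℝ} (hq : 0 < q)
    (hmeas : AEStronglyMeasurable g (volume.restrict (Ioc a b)))
    (hconv : ConvexOn ℝ (Icc a b) (fun t => |g t| ^ q)) :
    MemLp g (ENNReal.ofReal q) (volume.restrict (Ioc a b)) := by
  refine (integrable_norm_rpow_iff hmeas (by simpa using hq) ENNReal.ofReal_ne_top).1 ?_
  rw [ENNReal.toReal_ofReal hq.le]
  refine Integrable.of_bound (hmeas.norm.aemeasurable.pow_const q).aestronglyMeasurable
    (max (|g a| ^ q) (|g b| ^ q)) ((ae_restrict_iff' measurableSet_Ioc).2 (.of_forall fun t ht => ?_))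
  have hab : a ≤ b := ht.1.le.trans ht.2
  rw [Real.norm_of_nonneg (by positivity)]
  exact hconv.le_on_segment (left_mem_Icc.2 hab) (right_mem_Icc.2 hab)
    (segment_eq_Icc hab ▸ Ioc_subset_Icc_self ht)

theorem rpow_add_one_rpow_one_div_mul_rpow_one_div {p q x : ℝ} (hp : p ≠ 0)
    (hpq : 1 / p + 1 / q = 1) (hx : 0 ≤ x) :
    (x ^ (p + 1)) ^ (1 / p) * x ^ (1 / q) = x ^ 2 := by
  have hexp : (p + 1) * (1 / p) + 1 / q = 2 := by
    rw [add_mul, mul_one_div_cancel hp, add_assoc, one_mul, hpq]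
    norm_num
  rw [← Real.rpow_mul hx, ← Real.rpow_add' hx (by rw [hexp]; norm_num), hexp, Real.rpow_two]

/-- **Remark (case `n = 1`, `x = (a+b)/2`).** If `f` is absolutely continuous on `[a, b]` with
derivative `f'`, `p > 1`, `1/p + 1/q = 1`, and `|f'|^q` is convex on `[a, b]`, then
`|(f(a)+f(b))/2 - (1/(b-a)) ∫_a^b f| ≤ (2/(p+1))^{1/p} ((b-a)/4) (|f'(a)|^q + |f'(b)|^q)^{1/q}`. -/
theorem abs_trapezoid_sub_integral_le_of_convexOn_rpow_abs_deriv
    (f f' : ℝ → ℝ) (a b : ℝ) (hab : a < b)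
    (p q : ℝ) (hp : 1 < p) (hpq : 1 / p + 1 / q = 1)
    (hderiv : ∀ t ∈ Icc a b, HasDerivAt f (f' t) t)
    (hint : IntervalIntegrable f' volume a b)
    (hconv : ConvexOn ℝ (Icc a b) (fun t => |f' t| ^ q)) :
    |(f a + f b) / 2 - (1 / (b - a)) * ∫ t in a..b, f t| ≤
      (2 / (p + 1)) ^ (1 / p) * ((b - a) / 4) * (|f' a| ^ q + |f' b| ^ q) ^ (1 / q) := by
  have hpq' : p.HolderConjugate q :=
    Real.holderConjugate_iff.2 ⟨hp, by simpa only [one_div] using hpq⟩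
  have hba : 0 < b - a := sub_pos.2 hab
  have hf' : MemLp f' (ENNReal.ofReal q) (volume.restrict (Ioc a b)) :=
    memLp_of_convexOn_rpow_abs hpq'.symm.pos hint.1.aestronglyMeasurable hconv
  have hintegral_rpow : ∫ t in a..b, |f' t| ^ q ≤ (b - a) / 2 * (|f' a| ^ q + |f' b| ^ q) := by
    refine (hconv.intervalIntegral_le_mul_add_div_two hab.le ?_).trans_eq (by ring)
    rw [intervalIntegrable_iff_integrableOn_Ioc_of_le hab.le, IntegrableOn]
    simpa only [Real.norm_eq_abs, ENNReal.toReal_ofReal hpq'.symm.nonneg]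
      using hf'.integrable_norm_rpow (by simpa using hpq'.symm.pos) ENNReal.ofReal_ne_top
  have hholder := abs_integral_sub_midpoint_mul_le hab.le hpq' hf'
  rw [integral_sub_midpoint_mul_deriv_eq (uIcc_of_le hab.le ▸ hderiv) hint] at hholder
  have hpow := rpow_add_one_rpow_one_div_mul_rpow_one_div (x := (b - a) / 2)
    hpq'.ne_zero hpq (by positivity)
  rw [show (f a + f b) / 2 - (1 / (b - a)) * ∫ t in a..b, f t
      = ((b - a) * ((f a + f b) / 2) - ∫ t in a..b, f t) / (b - a) by field_simp,
    abs_div, abs_of_pos hba, div_le_iff₀ hba]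
  calc _ ≤ (2 / (p + 1) * ((b - a) / 2) ^ (p + 1)) ^ (1 / p) *
        ((b - a) / 2 * (|f' a| ^ q + |f' b| ^ q)) ^ (1 / q) :=
        hholder.trans (by gcongr; exacts [integral_nonneg hab.le fun t _ => by positivity,
          hpq'.symm.one_div_nonneg])
    _ = (2 / (p + 1)) ^ (1 / p) * ((((b - a) / 2) ^ (p + 1)) ^ (1 / p) * ((b - a) / 2) ^ (1 / q))
        * (|f' a| ^ q + |f' b| ^ q) ^ (1 / q) := by
        rw [Real.mul_rpow (by positivity) (by positivity),
          Real.mul_rpow (by positivity) (by positivity)]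
        ring
    _ = _ := by rw [hpow]; ring
end

section
/- Let f : [a,b] → ℝ be a mapping such that the (n−1)-th derivative f^(n−1) (n ≥ 1) is absolutely continuous on [a,b], let p > 1 and q satisfy 1/p + 1/q = 1, and suppose |f^(n)|^q is concave on [a,b]. Then for all x ∈ [a,b]: | ∫_a^b f(t) dt − Σ_{k=0}^{n−1} (1/(k+1)!) [ (x−a)^{k+1} f^(k)(a) + (−1)^k (b−x)^{k+1} f^(k)(b) ] | ≤ ((b−a)^{1/q} / n!) ( ((x−a)^{np+1} + (b−x)^{np+1}) / (np+1) )^{1/p} | f^(n)((a+b)/2) |. -/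
/-!
Integrating by parts `n` times turns the left-hand side into
`(1/n!) ∫_a^b (x - t)^n f^(n)(t) dt`. Hölder's inequality bounds this by the `L^p` norm of the
kernel `(x - t)^n`, which is computed explicitly, times the `L^q` norm of `f^(n)`. The latter is
controlled by the Hermite–Hadamard inequality `∫_a^b φ ≤ (b - a) φ((a + b)/2)` for the concave
function `φ = |f^(n)|^q`, which follows from `φ t + φ (a + b - t) ≤ 2 φ((a + b)/2)`.
-/

open MeasureTheory Set

namespace ConcaveOn

variable {φ : ℝ → ℝ} {a b : ℝ}

theorem add_apply_reflect_le (hφ : ConcaveOn ℝ (Icc a b) φ) {t : ℝ} (ht : t ∈ Icc a b) :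
    φ t + φ (a + b - t) ≤ 2 * φ ((a + b) / 2) := by
  have ht' : a + b - t ∈ Icc a b := ⟨by linarith [ht.2], by linarith [ht.1]⟩
  have h := hφ.2 ht ht' (by norm_num : (0 : ℝ) ≤ 1 / 2) (by norm_num : (0 : ℝ) ≤ 1 / 2)
    (by norm_num)
  simp only [smul_eq_mul] at h
  rw [show 1 / 2 * t + 1 / 2 * (a + b - t) = (a + b) / 2 by ring] at h
  linarith

theorem intervalIntegrable (hφ : ConcaveOn ℝ (Icc a b) φ) (hab : a ≤ b) :
    IntervalIntegrable φ volume a b := by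
  obtain ⟨C, hC⟩ : ∃ C, ∀ t ∈ Icc a b, |φ t| ≤ C := by
    have hlower : ∀ s ∈ Icc a b, min (φ a) (φ b) ≤ φ s := fun s hs ↦
      hφ.min_le_of_mem_Icc (left_mem_Icc.2 hab) (right_mem_Icc.2 hab) hs
    refine ⟨max |min (φ a) (φ b)| |2 * φ ((a + b) / 2) - min (φ a) (φ b)|,
      fun t ht ↦ abs_le_max_abs_abs (hlower t ht) ?_⟩
    have ht' : a + b - t ∈ Icc a b := ⟨by linarith [ht.2], by linarith [ht.1]⟩
    linarith [hφ.add_apply_reflect_le ht, hlower _ ht']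
  rw [intervalIntegrable_iff_integrableOn_Ioo_of_le hab]
  have hcont : ContinuousOn φ (Ioo a b) := by
    simpa only [interior_Icc] using hφ.continuousOn_interior
  refine Integrable.of_bound (hcont.aestronglyMeasurable measurableSet_Ioo) C ?_
  filter_upwards [ae_restrict_mem measurableSet_Ioo] with t ht
  exact hC t (Ioo_subset_Icc_self ht)

theorem integral_le_mul_apply_midpoint (hφ : ConcaveOn ℝ (Icc a b) φ) (hab : a ≤ b) :
    ∫ t in a..b, φ t ≤ (b - a) * φ ((a + b) / 2) := by
  have hi := hφ.intervalIntegrable hab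
  have hi' : IntervalIntegrable (fun t ↦ φ (a + b - t)) volume a b := by
    simpa using (hi.comp_sub_left (a + b)).symm
  have hreflect : ∫ t in a..b, φ (a + b - t) = ∫ t in a..b, φ t := by
    simp [intervalIntegral.integral_comp_sub_left]
  have hsum : ∫ t in a..b, (φ t + φ (a + b - t)) ≤ ∫ _ in a..b, 2 * φ ((a + b) / 2) :=
    intervalIntegral.integral_mono_on hab (hi.add hi') intervalIntegrable_const
      fun t ht ↦ hφ.add_apply_reflect_le ht
  rw [intervalIntegral.integral_add hi hi', hreflect, intervalIntegral.integral_const,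
    smul_eq_mul] at hsum
  linarith

end ConcaveOn

theorem rpow_integral_rpow_abs_le_of_concaveOn {g : ℝ → ℝ} {a b q : ℝ} (hq : 0 < q)
    (hg : ConcaveOn ℝ (Icc a b) fun t ↦ |g t| ^ q) (hab : a ≤ b) :
    (∫ t in a..b, |g t| ^ q) ^ (1 / q) ≤ (b - a) ^ (1 / q) * |g ((a + b) / 2)| :=
  calc (∫ t in a..b, |g t| ^ q) ^ (1 / q) ≤ ((b - a) * |g ((a + b) / 2)| ^ q) ^ (1 / q) :=
        Real.rpow_le_rpow (intervalIntegral.integral_nonneg hab fun t _ ↦ by positivity)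
          (hg.integral_le_mul_apply_midpoint hab) (by positivity)
    _ = (b - a) ^ (1 / q) * |g ((a + b) / 2)| := by
        rw [Real.mul_rpow (by linarith) (by positivity), ← Real.rpow_mul (abs_nonneg _),
          mul_one_div_cancel hq.ne', Real.rpow_one]

theorem intervalIntegral.abs_integral_mul_le_Lp_mul_Lq {p q : ℝ} (hpq : p.HolderConjugate q)
    {f g : ℝ → ℝ} {a b : ℝ} (hab : a ≤ b)
    (hf : AEStronglyMeasurable f (volume.restrict (Ioc a b)))
    (hg : AEStronglyMeasurable g (volume.restrict (Ioc a b)))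
    (hfp : IntervalIntegrable (fun t ↦ |f t| ^ p) volume a b)
    (hgq : IntervalIntegrable (fun t ↦ |g t| ^ q) volume a b) :
    |∫ t in a..b, f t * g t| ≤
      (∫ t in a..b, |f t| ^ p) ^ (1 / p) * (∫ t in a..b, |g t| ^ q) ^ (1 / q) := by
  have memLp : ∀ {h : ℝ → ℝ} {s : ℝ}, 0 < s →
      AEStronglyMeasurable h (volume.restrict (Ioc a b)) →
      IntervalIntegrable (fun t ↦ |h t| ^ s) volume a b →
      MemLp h (ENNReal.ofReal s) (volume.restrict (Ioc a b)) := fun hs hh hhs ↦ by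
    rw [← integrable_norm_rpow_iff hh (by simpa using hs) ENNReal.ofReal_ne_top,
      ENNReal.toReal_ofReal hs.le]
    simpa only [Real.norm_eq_abs, intervalIntegrable_iff_integrableOn_Ioc_of_le hab, IntegrableOn]
      using hhs
  simp only [intervalIntegral.integral_of_le hab, ← Real.norm_eq_abs]
  calc ‖∫ t in Ioc a b, f t * g t‖ ≤ ∫ t in Ioc a b, ‖f t‖ * ‖g t‖ := by
        simpa only [norm_mul] using
          MeasureTheory.norm_integral_le_integral_norm (f := fun t ↦ f t * g t)
    _ ≤ _ := integral_mul_norm_le_Lp_mul_Lq hpq (memLp hpq.pos hf hfp) (memLp hpq.symm.pos hg hgq)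

theorem integral_abs_rpow_of_nonneg {c r : ℝ} (hc : 0 ≤ c) (hr : 0 ≤ r) :
    ∫ s in (0 : ℝ)..c, |s| ^ r = c ^ (r + 1) / (r + 1) := by
  rw [intervalIntegral.integral_congr (g := fun s ↦ s ^ r) fun s hs ↦ by
      rw [uIcc_of_le hc] at hs
      simp only [abs_of_nonneg hs.1],
    integral_rpow (Or.inl (by linarith)), Real.zero_rpow (by linarith), sub_zero]

theorem integral_abs_sub_rpow {a b x r : ℝ} (hx : x ∈ Icc a b) (hr : 0 ≤ r) :
    ∫ t in a..b, |x - t| ^ r = ((x - a) ^ (r + 1) + (b - x) ^ (r + 1)) / (r + 1) := by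
  have hcont : Continuous fun t ↦ |x - t| ^ r :=
    ((continuous_const.sub continuous_id).abs).rpow_const fun _ ↦ Or.inr hr
  have hleft : ∫ t in a..x, |x - t| ^ r = (x - a) ^ (r + 1) / (r + 1) := by
    rw [intervalIntegral.integral_comp_sub_left (fun s ↦ |s| ^ r) x, sub_self]
    exact integral_abs_rpow_of_nonneg (by linarith [hx.1]) hr
  have hright : ∫ t in x..b, |x - t| ^ r = (b - x) ^ (r + 1) / (r + 1) := by
    simp_rw [abs_sub_comm x]
    rw [intervalIntegral.integral_comp_sub_right (fun s ↦ |s| ^ r) x, sub_self]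
    exact integral_abs_rpow_of_nonneg (by linarith [hx.2]) hr
  rw [← intervalIntegral.integral_add_adjacent_intervals (hcont.intervalIntegrable a x)
    (hcont.intervalIntegrable x b), hleft, hright, add_div]

theorem integral_abs_sub_pow_rpow {a b x p : ℝ} (hx : x ∈ Icc a b) (n : ℕ) (hp : 0 ≤ p) :
    ∫ t in a..b, |(x - t) ^ n| ^ p =
      ((x - a) ^ ((n : ℝ) * p + 1) + (b - x) ^ ((n : ℝ) * p + 1)) / ((n : ℝ) * p + 1) := by
  simp_rw [abs_pow, ← Real.rpow_natCast, ← Real.rpow_mul (abs_nonneg _)]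
  exact integral_abs_sub_rpow hx (mul_nonneg n.cast_nonneg hp)

theorem integral_sub_pow_succ_mul_deriv {g g' : ℝ → ℝ} {a b : ℝ} (x : ℝ) (n : ℕ)
    (hg : ∀ t ∈ uIcc a b, HasDerivAt g (g' t) t) (hg' : IntervalIntegrable g' volume a b) :
    ∫ t in a..b, (x - t) ^ (n + 1) * g' t =
      (x - b) ^ (n + 1) * g b - (x - a) ^ (n + 1) * g a +
        (n + 1) * ∫ t in a..b, (x - t) ^ n * g t := by
  have hpow : ∀ t ∈ uIcc a b,
      HasDerivAt (fun s ↦ (x - s) ^ (n + 1)) (-((n + 1) * (x - t) ^ n)) t := fun t _ ↦ by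
    simpa using ((hasDerivAt_id t).const_sub x).fun_pow (n + 1)
  rw [intervalIntegral.integral_mul_deriv_eq_deriv_mul hpow hg
      (Continuous.intervalIntegrable (by fun_prop) a b) hg',
    ← intervalIntegral.integral_const_mul]
  simp only [neg_mul, intervalIntegral.integral_neg, mul_assoc]
  ring

theorem integral_sub_sum_eq_integral_mul_iteratedDeriv {f : ℝ → ℝ} {a b : ℝ} (hab : a ≤ b)
    (x : ℝ) (n : ℕ)
    (hderiv : ∀ k < n, ∀ t ∈ Icc a b,
      HasDerivAt (iteratedDeriv k f) (iteratedDeriv (k + 1) f t) t)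
    (hint : IntervalIntegrable (iteratedDeriv n f) volume a b) :
    (∫ t in a..b, f t) -
      ∑ k ∈ Finset.range n, (1 / (Nat.factorial (k + 1) : ℝ)) *
        ((x - a) ^ (k + 1) * iteratedDeriv k f a +
          (-1 : ℝ) ^ k * (b - x) ^ (k + 1) * iteratedDeriv k f b) =
      (1 / (Nat.factorial n : ℝ)) * ∫ t in a..b, (x - t) ^ n * iteratedDeriv n f t := by
  induction n with
  | zero => simp
  | succ n ih =>
    have hderiv_n :
        ∀ t ∈ uIcc a b, HasDerivAt (iteratedDeriv n f) (iteratedDeriv (n + 1) f t) t := by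
      simpa only [uIcc_of_le hab] using hderiv n n.lt_succ_self
    have hint_n : IntervalIntegrable (iteratedDeriv n f) volume a b :=
      ContinuousOn.intervalIntegrable fun t ht ↦ (hderiv_n t ht).continuousAt.continuousWithinAt
    rw [Finset.sum_range_succ, ← sub_sub,
      ih (fun k hk ↦ hderiv k (hk.trans n.lt_succ_self)) hint_n,
      integral_sub_pow_succ_mul_deriv x n hderiv_n hint, Nat.factorial_succ]
    have hsign : (x - b) ^ (n + 1) = -((-1 : ℝ) ^ n * (b - x) ^ (n + 1)) := by
      rw [← neg_sub b x, neg_pow, pow_succ]; ring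
    rw [hsign]
    push_cast
    field_simp
    ring

theorem abs_integral_sub_sum_le_of_concaveOn_rpow_abs_iteratedDeriv_general
    (f : ℝ → ℝ) (a b : ℝ) (n : ℕ)
    (p q : ℝ) (hp : 1 < p) (hpq : 1 / p + 1 / q = 1)
    (hderiv : ∀ k < n, ∀ t ∈ Icc a b,
      HasDerivAt (iteratedDeriv k f) (iteratedDeriv (k + 1) f t) t)
    (hint : IntervalIntegrable (iteratedDeriv n f) volume a b)
    (hconc : ConcaveOn ℝ (Icc a b) (fun t => |iteratedDeriv n f t| ^ q))
    (x : ℝ) (hx : x ∈ Icc a b) :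
    |(∫ t in a..b, f t) -
      ∑ k ∈ Finset.range n, (1 / (Nat.factorial (k + 1) : ℝ)) *
        ((x - a) ^ (k + 1) * iteratedDeriv k f a +
          (-1 : ℝ) ^ k * (b - x) ^ (k + 1) * iteratedDeriv k f b)| ≤
      ((b - a) ^ (1 / q) / (Nat.factorial n : ℝ)) *
        (((x - a) ^ ((n : ℝ) * p + 1) + (b - x) ^ ((n : ℝ) * p + 1)) / ((n : ℝ) * p + 1))
          ^ (1 / p) *
        |iteratedDeriv n f ((a + b) / 2)| := by
  have hab : a ≤ b := hx.1.trans hx.2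
  have hpq' : p.HolderConjugate q :=
    Real.holderConjugate_iff.mpr ⟨hp, by simpa only [one_div] using hpq⟩
  set g := iteratedDeriv n f
  have hkernel_cont : Continuous fun t ↦ (x - t) ^ n := by fun_prop
  have hholder := intervalIntegral.abs_integral_mul_le_Lp_mul_Lq hpq' hab
    hkernel_cont.aestronglyMeasurable hint.1.aestronglyMeasurable
    ((hkernel_cont.abs.rpow_const fun _ ↦ Or.inr hpq'.nonneg).intervalIntegrable a b)
    (hconc.intervalIntegrable hab)
  rw [integral_sub_sum_eq_integral_mul_iteratedDeriv hab x n hderiv hint, abs_mul,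
    abs_of_pos (by positivity)]
  calc 1 / (Nat.factorial n : ℝ) * |∫ t in a..b, (x - t) ^ n * g t|
      ≤ 1 / (Nat.factorial n : ℝ) * ((∫ t in a..b, |(x - t) ^ n| ^ p) ^ (1 / p) *
          ((b - a) ^ (1 / q) * |g ((a + b) / 2)|)) := by
        gcongr
        exact hholder.trans <| mul_le_mul_of_nonneg_left
          (rpow_integral_rpow_abs_le_of_concaveOn hpq'.symm.pos hconc hab) <|
          Real.rpow_nonneg (intervalIntegral.integral_nonneg hab fun t _ ↦ by positivity) _
    _ = _ := by rw [integral_abs_sub_pow_rpow hx n hpq'.nonneg]; ring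

/-- **Theorem (concave case).** If `f^(n-1)` (`n ≥ 1`) is absolutely continuous on `[a, b]`,
`p > 1`, `1/p + 1/q = 1`, and `|f^(n)|^q` is concave on `[a, b]`, then for all `x ∈ [a, b]`,
`|∫_a^b f - ∑_{k=0}^{n-1} (1/(k+1)!) [(x-a)^{k+1} f^(k)(a) + (-1)^k (b-x)^{k+1} f^(k)(b)]|
  ≤ ((b-a)^{1/q}/n!) (((x-a)^{np+1} + (b-x)^{np+1})/(np+1))^{1/p} |f^(n)((a+b)/2)|`. -/
theorem abs_integral_sub_sum_le_of_concaveOn_rpow_abs_iteratedDeriv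
    (f : ℝ → ℝ) (a b : ℝ) (hab : a < b) (n : ℕ) (hn : 1 ≤ n)
    (p q : ℝ) (hp : 1 < p) (hpq : 1 / p + 1 / q = 1)
    (hderiv : ∀ k < n, ∀ t ∈ Icc a b,
      HasDerivAt (iteratedDeriv k f) (iteratedDeriv (k + 1) f t) t)
    (hint : IntervalIntegrable (iteratedDeriv n f) volume a b)
    (hconc : ConcaveOn ℝ (Icc a b) (fun t => |iteratedDeriv n f t| ^ q))
    (x : ℝ) (hx : x ∈ Icc a b) :
    |(∫ t in a..b, f t) -
      ∑ k ∈ Finset.range n, (1 / (Nat.factorial (k + 1) : ℝ)) *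
        ((x - a) ^ (k + 1) * iteratedDeriv k f a +
          (-1 : ℝ) ^ k * (b - x) ^ (k + 1) * iteratedDeriv k f b)| ≤
      ((b - a) ^ (1 / q) / (Nat.factorial n : ℝ)) *
        (((x - a) ^ ((n : ℝ) * p + 1) + (b - x) ^ ((n : ℝ) * p + 1)) / ((n : ℝ) * p + 1))
          ^ (1 / p) *
        |iteratedDeriv n f ((a + b) / 2)| :=
  abs_integral_sub_sum_le_of_concaveOn_rpow_abs_iteratedDeriv_general f a b n p q hp hpq hderiv hint
    hconc x hx
end

section
/- Let f : I° ⊂ ℝ → ℝ be a differentiable mapping on the interior I° of an interval I, and let a, b ∈ I° with a < b. If |f′| is convex on [a,b], then: | (f(a)+f(b))/2 − (1/(b−a)) ∫_a^b f(x) dx | ≤ (b−a)( |f′(a)| + |f′(b)| ) / 8. -/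
/-!
Integrating by parts against the kernel `x - (a + b) / 2` turns `b - a` times the trapezoid
error into `∫ (x - (a + b) / 2) f'(x) dx`. Convexity bounds `|f'|` on `[a, b]` by the chord
through `(a, |f'(a)|)` and `(b, |f'(b)|)`, and the integral of `|x - (a + b) / 2|` against that
chord is `(b - a) ^ 3 (|f'(a)| + |f'(b)|) / 8`.
-/

open MeasureTheory Set intervalIntegral

theorem ConvexOn.mul_le_add_mul_of_mem_Icc {𝕜 : Type*} [Field 𝕜] [LinearOrder 𝕜]
    [IsStrictOrderedRing 𝕜] {s : Set 𝕜} {f : 𝕜 → 𝕜} (hf : ConvexOn 𝕜 s f) {x y z : 𝕜}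
    (hx : x ∈ s) (hz : z ∈ s) (hy : y ∈ Icc x z) :
    (z - x) * f y ≤ (z - y) * f x + (y - x) * f z := by
  rcases hy.1.eq_or_lt with rfl | hxy
  · simp
  rcases hy.2.eq_or_lt with rfl | hyz
  · simp
  exact hf.secant_mono_aux1 hx hz hxy hyz

theorem intervalIntegrable_of_convexOn_abs {g : ℝ → ℝ} {a b : ℝ} (hg : Measurable g)
    (hconv : ConvexOn ℝ (Icc a b) fun x => |g x|) (hab : a ≤ b) :
    IntervalIntegrable g volume a b := by
  refine (intervalIntegrable_const (c := max |g a| |g b|)).mono_fun'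
    hg.aestronglyMeasurable ?_
  rw [uIoc_of_le hab]
  filter_upwards [ae_restrict_mem measurableSet_Ioc] with x hx
  exact hconv.le_max_of_mem_Icc (left_mem_Icc.2 hab) (right_mem_Icc.2 hab)
    (Ioc_subset_Icc_self hx)

theorem integral_sub_midpoint_mul_deriv {f f' : ℝ → ℝ} {a b : ℝ}
    (hf : ∀ x ∈ uIcc a b, HasDerivAt f (f' x) x) (hf' : IntervalIntegrable f' volume a b) :
    ∫ x in a..b, (x - (a + b) / 2) * f' x = (b - a) * (f a + f b) / 2 - ∫ x in a..b, f x := by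
  rw [integral_mul_deriv_eq_deriv_mul (fun x _ => (hasDerivAt_id' x).sub_const ((a + b) / 2)) hf
    intervalIntegrable_const hf']
  simp only [one_mul]
  ring

theorem integral_abs_sub_midpoint_mul_affine {a b : ℝ} (A B : ℝ) (hab : a ≤ b) :
    ∫ x in a..b, |x - (a + b) / 2| * ((b - x) * A + (x - a) * B) =
      (b - a) ^ 3 * (A + B) / 8 := by
  set m := (a + b) / 2 with hm
  let φ : ℝ → ℝ := fun x => (x - m) * ((b - x) * A + (x - a) * B)
  let G : ℝ → ℝ := fun x => (b - a) * (A + B) / 4 * (x - m) ^ 2 + (B - A) / 3 * (x - m) ^ 3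
  have hG : ∀ x, HasDerivAt G (φ x) x := fun x => by
    have ht : HasDerivAt (fun x => x - m) 1 x := (hasDerivAt_id' x).sub_const m
    refine (((ht.fun_pow 2).const_mul _).add ((ht.fun_pow 3).const_mul _)).congr_deriv ?_
    simp only [φ]
    ring
  have hφ : ∀ u v, IntervalIntegrable φ volume u v := fun u v =>
    Continuous.intervalIntegrable (by fun_prop) u v
  have hcont : Continuous fun x => |x - m| * ((b - x) * A + (x - a) * B) := by fun_prop
  have left : ∫ x in a..m, |x - m| * ((b - x) * A + (x - a) * B) = -∫ x in a..m, φ x := by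
    rw [← intervalIntegral.integral_neg]
    refine integral_congr fun x hx => ?_
    rw [uIcc_of_le (by linarith)] at hx
    simp only [φ, abs_of_nonpos (sub_nonpos.2 hx.2), neg_mul]
  have right : ∫ x in m..b, |x - m| * ((b - x) * A + (x - a) * B) = ∫ x in m..b, φ x := by
    refine integral_congr fun x hx => ?_
    rw [uIcc_of_le (by linarith)] at hx
    simp only [φ, abs_of_nonneg (sub_nonneg.2 hx.1)]
  rw [← integral_add_adjacent_intervals (hcont.intervalIntegrable a m)
    (hcont.intervalIntegrable m b), left, right,
    integral_eq_sub_of_hasDerivAt (fun x _ => hG x) (hφ _ _),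
    integral_eq_sub_of_hasDerivAt (fun x _ => hG x) (hφ _ _)]
  simp only [G, hm]
  ring

theorem mul_abs_integral_sub_midpoint_mul_le {g : ℝ → ℝ} {a b : ℝ} (A B : ℝ)
    (hab : a ≤ b) (hg : IntervalIntegrable g volume a b)
    (hbound : ∀ x ∈ Icc a b, (b - a) * |g x| ≤ (b - x) * A + (x - a) * B) :
    (b - a) * |∫ x in a..b, (x - (a + b) / 2) * g x| ≤ (b - a) ^ 3 * (A + B) / 8 := by
  have hkernel : ContinuousOn (fun x => |x - (a + b) / 2|) (uIcc a b) := by fun_prop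
  calc (b - a) * |∫ x in a..b, (x - (a + b) / 2) * g x|
      ≤ (b - a) * ∫ x in a..b, |x - (a + b) / 2| * |g x| := by
        gcongr
        exact (abs_integral_le_integral_abs hab).trans_eq (by simp only [abs_mul])
    _ = ∫ x in a..b, |x - (a + b) / 2| * ((b - a) * |g x|) := by
        rw [← intervalIntegral.integral_const_mul]
        ring_nf
    _ ≤ ∫ x in a..b, |x - (a + b) / 2| * ((b - x) * A + (x - a) * B) := by
        refine integral_mono_on hab ((hg.abs.const_mul _).continuousOn_mul hkernel)
          (Continuous.intervalIntegrable (by fun_prop) _ _) fun x hx => ?_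
        exact mul_le_mul_of_nonneg_left (hbound x hx) (abs_nonneg _)
    _ = (b - a) ^ 3 * (A + B) / 8 := integral_abs_sub_midpoint_mul_affine A B hab

/-- **Theorem (Dragomir–Agarwal).** Let `f` be differentiable on the interior of an interval
`I ⊆ ℝ`, and let `a, b ∈ I°` with `a < b`. If `|f'|` is convex on `[a, b]`, then
`|(f(a)+f(b))/2 - (1/(b-a)) ∫_a^b f| ≤ (b-a)(|f'(a)| + |f'(b)|)/8`. -/
theorem abs_trapezoid_sub_integral_le_of_convexOn_abs_deriv
    (I : Set ℝ) (hI : Convex ℝ I) (f : ℝ → ℝ)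
    (hf : ∀ t ∈ interior I, DifferentiableAt ℝ f t)
    (a b : ℝ) (ha : a ∈ interior I) (hb : b ∈ interior I) (hab : a < b)
    (hconv : ConvexOn ℝ (Icc a b) (fun t => |deriv f t|)) :
    |(f a + f b) / 2 - (1 / (b - a)) * ∫ t in a..b, f t| ≤
      (b - a) * (|deriv f a| + |deriv f b|) / 8 := by
  have hba : 0 < b - a := sub_pos.2 hab
  have hsub : Icc a b ⊆ interior I := hI.interior.ordConnected.out ha hb
  have hderiv : ∀ x ∈ uIcc a b, HasDerivAt f (deriv f x) x := fun x hx =>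
    (hf x (hsub (by rwa [uIcc_of_le hab.le] at hx))).hasDerivAt
  have hint := intervalIntegrable_of_convexOn_abs (measurable_deriv f) hconv hab.le
  have hchord : ∀ x ∈ Icc a b,
      (b - a) * |deriv f x| ≤ (b - x) * |deriv f a| + (x - a) * |deriv f b| := fun x hx =>
    hconv.mul_le_add_mul_of_mem_Icc (left_mem_Icc.2 hab.le) (right_mem_Icc.2 hab.le) hx
  have key := mul_abs_integral_sub_midpoint_mul_le _ _ hab.le hint hchord
  rw [integral_sub_midpoint_mul_deriv hderiv hint] at key
  have hrw : (f a + f b) / 2 - (1 / (b - a)) * ∫ t in a..b, f t =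
      ((b - a) * (f a + f b) / 2 - ∫ t in a..b, f t) / (b - a) := by
    field_simp
  rw [hrw, abs_div, abs_of_pos hba, div_le_iff₀ hba]
  exact le_of_mul_le_mul_left (key.trans_eq (by ring)) hba
end
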